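/- Every closed subspace of a Δ-space is a Δ-space. -/

import Mathlib

/-! Push a decreasing sequence with empty intersection forward along a continuous injection
(injectivity keeps the intersection empty), cover the images by open sets there, and pull
those open sets back. -/

def IsDeltaSpace (X : Type*) [TopologicalSpace X] : Prop :=
  ∀ D : ℕ → Set X, (∀ n, D (n + 1) ⊆ D n) → (⋂ n, D n) = ∅ →
    ∃ V : ℕ → Set X, (∀ n, IsOpen (V n)) ∧ (∀ n, V (n + 1) ⊆ V n) ∧
      (⋂ n, V n) = ∅ ∧ ∀ n, D n ⊆ V n

theorem IsDeltaSpace.of_continuous_injective {X Y : Type*} [TopologicalSpace X]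
    [TopologicalSpace Y] (hX : IsDeltaSpace X) {f : Y → X} (hf : Continuous f)
    (hinj : Function.Injective f) : IsDeltaSpace Y := by
  intro D hD hDempty
  obtain ⟨V, hVopen, hVanti, hVempty, hDV⟩ := hX (fun n => f '' D n)
    (fun n => Set.image_mono (hD n))
    (by rw [← hinj.injOn.image_iInter_eq, hDempty, Set.image_empty])
  exact ⟨fun n => f ⁻¹' V n, fun n => (hVopen n).preimage hf,
    fun n => Set.preimage_mono (hVanti n),
    by rw [← Set.preimage_iInter, hVempty, Set.preimage_empty],
    fun n => Set.image_subset_iff.1 (hDV n)⟩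

theorem isDeltaSpace_closed_subspace_general {X : Type*} [TopologicalSpace X] (hX : IsDeltaSpace X)
    (F : Set X) : IsDeltaSpace F :=
  hX.of_continuous_injective continuous_subtype_val Subtype.val_injective

theorem isDeltaSpace_closed_subspace {X : Type*} [TopologicalSpace X] (hX : IsDeltaSpace X)
    (F : Set X) (hF : IsClosed F) : IsDeltaSpace F :=
  isDeltaSpace_closed_subspace_general hX F
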